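/- For a matroid M of rank 2 on ground set E, the basis-generating polynomial M(y) = Σ_{bases B} Π_{e∈B} y_e has the half-plane property: if Re(y_e) > 0 for all e ∈ E then M(y) ≠ 0. -/

import Mathlib

/-!
In a rank-two matroid the bases are exactly the pairs of nonloops in different parallel classes
(the fibres of `e ↦ M.closure {e}`), and there are at least two classes. Hence twice the
basis-generating polynomial is `∑ₖ Sₖ (T - Sₖ)`, where `Sₖ` is the sum of the `y e` over the
`k`-th class and `T = ∑ₖ Sₖ`. All `Sₖ` and `T - Sₖ` lie in the open right half-plane, which is
closed under addition and inversion, so it contains every `Sₖ (T - Sₖ) / T = (Sₖ⁻¹ + (T - Sₖ)⁻¹)⁻¹`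
and hence their sum: thus `∑ₖ Sₖ (T - Sₖ) ≠ 0`.
-/

open Finset

namespace Complex

lemma inv_re_pos {z : ℂ} (hz : 0 < z.re) : 0 < z⁻¹.re := by
  have hz0 : z ≠ 0 := fun h => by simp [h] at hz
  rw [inv_re]
  exact div_pos hz (normSq_pos.mpr hz0)

lemma re_mul_div_add_pos {a b : ℂ} (ha : 0 < a.re) (hb : 0 < b.re) :
    0 < (a * b / (a + b)).re := by
  have ha0 : a ≠ 0 := fun h => by simp [h] at ha
  have hb0 : b ≠ 0 := fun h => by simp [h] at hb
  have hab : a * b / (a + b) = (a⁻¹ + b⁻¹)⁻¹ := by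
    rw [inv_add_inv ha0 hb0, inv_div]
  rw [hab]
  exact inv_re_pos (by rw [add_re]; exact add_pos (inv_re_pos ha) (inv_re_pos hb))

lemma sum_mul_sum_sub_ne_zero {ι : Type*} (t : Finset ι) (s : ι → ℂ)
    (hs : ∀ i ∈ t, 0 < (s i).re) (ht : 1 < #t) :
    ∑ i ∈ t, s i * (∑ j ∈ t, s j - s i) ≠ 0 := by
  classical
  set T := ∑ j ∈ t, s j
  have hsub : ∀ i ∈ t, 0 < (T - s i).re := fun i hi => by
    rw [← sum_erase_eq_sub hi, re_sum]
    refine sum_pos (fun j hj => hs j (mem_of_mem_erase hj)) ?_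
    rw [← card_pos, card_erase_of_mem hi]
    omega
  have hT : 0 < T.re := by
    obtain ⟨i, hi⟩ := card_pos.mp (by omega : 0 < #t)
    simpa using add_pos (hs i hi) (hsub i hi)
  have hT0 : T ≠ 0 := fun h => by simp [h] at hT
  intro h
  have : 0 < (∑ i ∈ t, s i * (T - s i) / T).re := by
    rw [re_sum]
    refine sum_pos (fun i hi => ?_) (card_pos.mp (by omega))
    simpa using re_mul_div_add_pos (hs i hi) (hsub i hi)
  rw [← sum_div, h, zero_div, zero_re] at this
  exact lt_irrefl 0 this

lemma sum_sum_filter_ne_mul_ne_zero {ι κ : Type*} [DecidableEq κ] (N : Finset ι)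
    (c : ι → κ) (y : ι → ℂ) (hy : ∀ i ∈ N, 0 < (y i).re)
    (hc : ∃ i ∈ N, ∃ j ∈ N, c i ≠ c j) :
    ∑ i ∈ N, ∑ j ∈ N with c i ≠ c j, y i * y j ≠ 0 := by
  set S : κ → ℂ := fun k => ∑ j ∈ N with c j = k, y j
  have hmaps : ∀ i ∈ N, c i ∈ N.image c := fun i hi => mem_image_of_mem c hi
  have hrow : ∀ i ∈ N, ∑ j ∈ N with c i ≠ c j, y i * y j
      = y i * (∑ k ∈ N.image c, S k - S (c i)) := fun i _ => by
    rw [← mul_sum, sum_fiberwise_of_maps_to hmaps, ← sum_filter_add_sum_filter_not N (c i = c ·)]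
    simp only [S, eq_comm, add_sub_cancel_left]
  rw [sum_congr rfl hrow, ← sum_fiberwise_of_maps_to hmaps]
  have hclass : ∀ k ∈ N.image c, ∑ i ∈ N with c i = k, y i * (∑ l ∈ N.image c, S l - S (c i))
      = S k * (∑ l ∈ N.image c, S l - S k) := fun k _ => by
    rw [sum_mul]
    exact sum_congr rfl fun i hi => by rw [(mem_filter.mp hi).2]
  rw [sum_congr rfl hclass]
  obtain ⟨i, hi, j, hj, hij⟩ := hc
  refine sum_mul_sum_sub_ne_zero _ S (fun k hk => ?_)
    (one_lt_card.mpr ⟨c i, hmaps i hi, c j, hmaps j hj, hij⟩)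
  obtain ⟨i', hi', rfl⟩ := mem_image.mp hk
  rw [Complex.re_sum]
  exact sum_pos (fun j hj => hy j (mem_filter.mp hj).1) ⟨i', mem_filter.mpr ⟨hi', rfl⟩⟩

end Complex

lemma sum_sum_ite_pair_eq_pair {α β : Type*} [Fintype α] [DecidableEq α] [CommSemiring β]
    (f : α → β) {x y : α} (hxy : x ≠ y) :
    ∑ a, ∑ b, (if ({a, b} : Set α) = {x, y} then f a * f b else 0) = 2 * (f x * f y) := by
  rw [← Fintype.sum_prod_type'
      (f := fun a b => if ({a, b} : Set α) = {x, y} then f a * f b else 0), ← sum_filter]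
  have hfiber : ({p | ({p.1, p.2} : Set α) = {x, y}} : Finset (α × α)) = {(x, y), (y, x)} := by
    ext ⟨a, b⟩
    simp [Set.pair_eq_pair_iff]
  rw [hfiber, sum_pair (by simp [hxy])]
  ring

lemma two_mul_finsum_finprod_eq_sum_sum_of_ncard_eq_two {α β : Type*} [Fintype α]
    [CommSemiring β] (𝓑 : Set (Set α)) [DecidablePred (· ∈ 𝓑)] (h𝓑 : ∀ B ∈ 𝓑, B.ncard = 2)
    (f : α → β) :
    2 * ∑ᶠ B ∈ 𝓑, ∏ᶠ e ∈ B, f e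
      = ∑ a, ∑ b, if ({a, b} : Set α) ∈ 𝓑 then f a * f b else 0 := by
  classical
  have hpair : ∀ B ∈ 𝓑.toFinite.toFinset, 2 * ∏ᶠ e ∈ B, f e
      = ∑ a, ∑ b, if ({a, b} : Set α) = B then f a * f b else 0 := fun B hB => by
    obtain ⟨x, y, hxy, rfl⟩ := Set.ncard_eq_two.mp (h𝓑 B (by simpa using hB))
    rw [finprod_mem_pair hxy, sum_sum_ite_pair_eq_pair f hxy]
  rw [finsum_mem_eq_finite_toFinset_sum _ 𝓑.toFinite, mul_sum, sum_congr rfl hpair, sum_comm]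
  refine sum_congr rfl fun a _ => ?_
  rw [sum_comm]
  refine sum_congr rfl fun b _ => ?_
  simp [sum_ite_eq]

lemma Matroid.isBase_pair_iff_of_forall_ncard_eq_two {α : Type*} {M : Matroid α}
    (hrank : ∀ B, M.IsBase B → B.ncard = 2) {a b : α} :
    M.IsBase {a, b} ↔ M.IsNonloop a ∧ M.IsNonloop b ∧ M.closure {a} ≠ M.closure {b} := by
  constructor
  · intro hB
    have hab : a ≠ b := by
      rintro rfl
      simpa using hrank _ hB
    have ha := hB.indep.isNonloop_of_mem (Set.mem_insert a {b})
    have hb := hB.indep.isNonloop_of_mem (Set.mem_insert_of_mem a rfl)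
    rw [Ne, ha.closure_eq_closure_iff_eq_or_dep hb, not_or, not_not]
    exact ⟨ha, hb, hab, hB.indep⟩
  · rintro ⟨ha, hb, hcl⟩
    rw [Ne, ha.closure_eq_closure_iff_eq_or_dep hb, not_or, not_not] at hcl
    obtain ⟨B, hB, hsub⟩ := hcl.2.exists_isBase_superset
    have hBfin : B.Finite := Set.finite_of_ncard_pos (by rw [hrank B hB]; norm_num)
    rwa [Set.eq_of_subset_of_ncard_le hsub (by rw [hrank B hB, Set.ncard_pair hcl.1]) hBfin]

theorem rank_two_half_plane_property {α : Type*} [Fintype α]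
    (M : Matroid α)
    (hrank : ∀ B : Set α, M.IsBase B → B.ncard = 2)
    (y : α → ℂ) (hy : ∀ e : α, 0 < (y e).re) :
    (∑ᶠ B ∈ {B : Set α | M.IsBase B}, ∏ᶠ e ∈ B, y e) ≠ 0 := by
  classical
  set N : Finset α := {e | M.IsNonloop e}
  have hpairs : 2 * ∑ᶠ B ∈ {B : Set α | M.IsBase B}, ∏ᶠ e ∈ B, y e
      = ∑ a ∈ N, ∑ b ∈ N with M.closure {a} ≠ M.closure {b}, y a * y b := by
    rw [two_mul_finsum_finprod_eq_sum_sum_of_ncard_eq_two {B | M.IsBase B} hrank]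
    simp [M.isBase_pair_iff_of_forall_ncard_eq_two hrank, N, sum_filter, filter_filter, ite_and]
  have hclasses : ∃ a ∈ N, ∃ b ∈ N, M.closure {a} ≠ M.closure {b} := by
    obtain ⟨B, hB⟩ := M.exists_isBase
    obtain ⟨a, b, -, rfl⟩ := Set.ncard_eq_two.mp (hrank B hB)
    obtain ⟨ha, hb, hab⟩ := (M.isBase_pair_iff_of_forall_ncard_eq_two hrank).mp hB
    exact ⟨a, by simpa [N] using ha, b, by simpa [N] using hb, hab⟩
  intro h
  refine Complex.sum_sum_filter_ne_mul_ne_zero N (fun e => M.closure {e}) y (fun e _ => hy e)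
    hclasses ?_
  rw [← hpairs, h, mul_zero]
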